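/- arXiv:2303.09579 — 2 statements merged into one kernel-verified Lean document; each statement's English description precedes it below -/
import Mathlib

section
/- Let (X,d) be a compact metric space without isolated points and suppose f_{1,∞} converges uniformly to f. If (X, f_{1,∞}) is multi-transitive and the set of periodic points of f_{1,∞} is dense in X, then (X, f_{1,∞}) is N-sensitive. -/
/-!
Given nonempty open sets `U₀, …, U_{r-1}`, pick periodic points `qᵢ ∈ Uᵢ` with a common period `N`.
Multi-transitivity, with its time `k` chosen divisible by `N`, sends some `yᵢ ∈ Uᵢ` at time
`(i + 1) k` into the open set of points farther than `δ` from `qᵢ`, while `qᵢ` is back at itself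
at that time. Taking `δ` a third of the distance between two distinct points makes that open set
nonempty for every `qᵢ`.
-/

open Metric Set MeasureTheory

/-- `nacomp f n = f_n ∘ ⋯ ∘ f_1` (and `nacomp f 0 = id`): the time-`n` map of the
non-autonomous system `f_{1,∞}`. -/
def nacomp {X : Type*} (f : ℕ → X → X) : ℕ → X → X
  | 0 => id
  | n + 1 => f (n + 1) ∘ nacomp f n

/-- `compFrom f i k = f_{i+k-1} ∘ ⋯ ∘ f_i`, i.e. `f_i^k`. -/
def compFrom {X : Type*} (f : ℕ → X → X) (i : ℕ) : ℕ → X → X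
  | 0 => id
  | k + 1 => f (i + k) ∘ compFrom f i k

/-- Multi-sensitivity of `f_{1,∞}` with respect to the vector `(v 0, …, v (r-1))`. -/
def multiSensWrt {X : Type*} [MetricSpace X] (f : ℕ → X → X) (r : ℕ) (v : ℕ → ℕ) : Prop :=
  ∃ δ > 0, ∀ U : ℕ → Set X, (∀ i < r, IsOpen (U i) ∧ (U i).Nonempty) →
    ∃ n ≥ 1, ∀ i < r, ∃ x ∈ U i, ∃ y ∈ U i,
      δ < dist (nacomp f (n * v i) x) (nacomp f (n * v i) y)

/-- Strong multi-sensitivity: multi-sensitivity w.r.t. every vector in `ℕ^r`, every `r`. -/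
def strongMultiSens {X : Type*} [MetricSpace X] (f : ℕ → X → X) : Prop :=
  ∀ r ≥ 1, ∀ v : ℕ → ℕ, (∀ i < r, 1 ≤ v i) → multiSensWrt f r v

/-- `𝒩`-sensitivity: multi-sensitivity w.r.t. `(1, 2, …, r)` for every `r`. -/
def nSens {X : Type*} [MetricSpace X] (f : ℕ → X → X) : Prop :=
  ∀ r ≥ 1, multiSensWrt f r (fun i => i + 1)

/-- Sensitivity of the non-autonomous system. -/
def sens {X : Type*} [MetricSpace X] (f : ℕ → X → X) : Prop :=
  ∃ δ > 0, ∀ U : Set X, IsOpen U → U.Nonempty →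
    ∃ n ≥ 1, ∃ x ∈ U, ∃ y ∈ U, δ < dist (nacomp f n x) (nacomp f n y)

/-- Multi-sensitivity of the non-autonomous system. -/
def multiSens {X : Type*} [MetricSpace X] (f : ℕ → X → X) : Prop :=
  ∃ δ > 0, ∀ r : ℕ, ∀ U : ℕ → Set X, (∀ i < r, IsOpen (U i) ∧ (U i).Nonempty) →
    ∃ n ≥ 1, ∀ i < r, ∃ x ∈ U i, ∃ y ∈ U i, δ < dist (nacomp f n x) (nacomp f n y)

/-- Cofinite sensitivity: for some `δ > 0`, for every nonempty open `U` the set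
`N_{f_{1,∞}}(U, δ)` is cofinite in `{1, 2, …}`. -/
def cofSens {X : Type*} [MetricSpace X] (f : ℕ → X → X) : Prop :=
  ∃ δ > 0, ∀ U : Set X, IsOpen U → U.Nonempty →
    {n : ℕ | 1 ≤ n ∧ ¬ ∃ x ∈ U, ∃ y ∈ U, δ < dist (nacomp f n x) (nacomp f n y)}.Finite

/-- Autonomous analogue of `multiSensWrt` for a single map `g`. -/
def multiSensWrtAuto {X : Type*} [MetricSpace X] (g : X → X) (r : ℕ) (v : ℕ → ℕ) : Prop :=
  ∃ δ > 0, ∀ U : ℕ → Set X, (∀ i < r, IsOpen (U i) ∧ (U i).Nonempty) →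
    ∃ n ≥ 1, ∀ i < r, ∃ x ∈ U i, ∃ y ∈ U i,
      δ < dist (g^[n * v i] x) (g^[n * v i] y)

def strongMultiSensAuto {X : Type*} [MetricSpace X] (g : X → X) : Prop :=
  ∀ r ≥ 1, ∀ v : ℕ → ℕ, (∀ i < r, 1 ≤ v i) → multiSensWrtAuto g r v

def nSensAuto {X : Type*} [MetricSpace X] (g : X → X) : Prop :=
  ∀ r ≥ 1, multiSensWrtAuto g r (fun i => i + 1)

/-- `k`-periodicity of the non-autonomous system: `f_{j+kl} = f_j` for `l ≥ 1`, `1 ≤ j ≤ k`. -/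
def kPeriodic {X : Type*} (f : ℕ → X → X) (k : ℕ) : Prop :=
  1 ≤ k ∧ ∀ l ≥ 1, ∀ j, 1 ≤ j → j ≤ k → f (j + k * l) = f j

/-- Multi-transitivity of the non-autonomous system. -/
def multiTrans {X : Type*} [TopologicalSpace X] (f : ℕ → X → X) : Prop :=
  ∀ m ≥ 1, ∀ U V : ℕ → Set X,
    (∀ i < m, IsOpen (U i) ∧ (U i).Nonempty ∧ IsOpen (V i) ∧ (V i).Nonempty) →
    ∃ k ≥ 1, ∀ i < m, (nacomp f ((i + 1) * k) '' U i ∩ V i).Nonempty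

/-- Multi-sensitivity w.r.t. a vector, for an explicit distance function `ρ`
(used for products equipped with the metric `√(d₁² + d₂²)`). -/
def multiSensWrtD {Z : Type*} [TopologicalSpace Z] (ρ : Z → Z → ℝ) (f : ℕ → Z → Z)
    (r : ℕ) (v : ℕ → ℕ) : Prop :=
  ∃ δ > 0, ∀ U : ℕ → Set Z, (∀ i < r, IsOpen (U i) ∧ (U i).Nonempty) →
    ∃ n ≥ 1, ∀ i < r, ∃ x ∈ U i, ∃ y ∈ U i,
      δ < ρ (nacomp f (n * v i) x) (nacomp f (n * v i) y)

def strongMultiSensD {Z : Type*} [TopologicalSpace Z] (ρ : Z → Z → ℝ) (f : ℕ → Z → Z) : Prop :=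
  ∀ r ≥ 1, ∀ v : ℕ → ℕ, (∀ i < r, 1 ≤ v i) → multiSensWrtD ρ f r v

def nSensD {Z : Type*} [TopologicalSpace Z] (ρ : Z → Z → ℝ) (f : ℕ → Z → Z) : Prop :=
  ∀ r ≥ 1, multiSensWrtD ρ f r (fun i => i + 1)

/-- The metric `√(d₁² + d₂²)` on a product of metric spaces. -/
noncomputable def prodDist {X Y : Type*} [MetricSpace X] [MetricSpace Y]
    (p q : X × Y) : ℝ :=
  Real.sqrt (dist p.1 q.1 ^ 2 + dist p.2 q.2 ^ 2)

/-- `N_{f_{1,∞}^{[v]}}(U, δ)` for an explicit distance function `ρ`. -/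
def NsetD {Z : Type*} (ρ : Z → Z → ℝ) (f : ℕ → Z → Z) (v : ℕ) (U : Set Z) (δ : ℝ) : Set ℕ :=
  {n : ℕ | 1 ≤ n ∧ ∃ x ∈ U, ∃ y ∈ U, δ < ρ (nacomp f (n * v) x) (nacomp f (n * v) y)}

/-- `N_{f_{1,∞}^{[v]} × g_{1,∞}^{[v']}}(U × U', δ)` for the product metric `√(d₁² + d₂²)`. -/
noncomputable def NsetProd {X Y : Type*} [MetricSpace X] [MetricSpace Y]
    (f : ℕ → X → X) (g : ℕ → Y → Y) (v v' : ℕ) (U : Set X) (U' : Set Y) (δ : ℝ) : Set ℕ :=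
  {n : ℕ | 1 ≤ n ∧ ∃ p ∈ U ×ˢ U', ∃ q ∈ U ×ˢ U',
    δ < prodDist (nacomp f (n * v) p.1, nacomp g (n * v') p.2)
                 (nacomp f (n * v) q.1, nacomp g (n * v') q.2)}

section

variable {X : Type*}

/-- Every point satisfies this for `N = 0`; periodic points are those with some `N ≥ 1`. -/
def IsNonautPeriodicPt (f : ℕ → X → X) (N : ℕ) (x : X) : Prop :=
  ∀ n ≥ 1, nacomp f (n * N) x = x

theorem IsNonautPeriodicPt.nacomp_eq_self_of_dvd {f : ℕ → X → X} {N M : ℕ} {x : X}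
    (hx : IsNonautPeriodicPt f N x) (hNM : N ∣ M) (hM : 1 ≤ M) : nacomp f M x = x := by
  obtain ⟨c, rfl⟩ := hNM
  rw [mul_comm]
  exact hx c (Nat.pos_of_mul_pos_left hM)

theorem IsNonautPeriodicPt.of_dvd {f : ℕ → X → X} {N M : ℕ} {x : X}
    (hx : IsNonautPeriodicPt f N x) (hNM : N ∣ M) (hM : 1 ≤ M) : IsNonautPeriodicPt f M x :=
  fun n hn => hx.nacomp_eq_self_of_dvd (dvd_mul_of_dvd_right hNM n) (Nat.mul_pos hn hM)

theorem exists_common_period [TopologicalSpace X] {f : ℕ → X → X}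
    (hdense : Dense {x : X | ∃ N ≥ 1, IsNonautPeriodicPt f N x})
    {r : ℕ} {U : ℕ → Set X} (hU : ∀ i < r, IsOpen (U i) ∧ (U i).Nonempty) :
    ∃ N ≥ 1, ∀ i < r, ∃ q ∈ U i, IsNonautPeriodicPt f N q := by
  induction r with
  | zero => exact ⟨1, le_rfl, fun i hi => absurd hi i.not_lt_zero⟩
  | succ r ih =>
    obtain ⟨N, hN, hq⟩ := ih fun i hi => hU i (Nat.lt_succ_of_lt hi)
    obtain ⟨p, ⟨M, hM, hp⟩, hpU⟩ :=
      hdense.exists_mem_open (hU r r.lt_succ_self).1 (hU r r.lt_succ_self).2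
    refine ⟨N * M, Nat.mul_pos hN hM, fun i hi => ?_⟩
    rcases Nat.lt_succ_iff_lt_or_eq.1 hi with hi | rfl
    · obtain ⟨q, hqU, hq⟩ := hq i hi
      exact ⟨q, hqU, hq.of_dvd (dvd_mul_right N M) (Nat.mul_pos hN hM)⟩
    · exact ⟨p, hpU, hp.of_dvd (dvd_mul_left M N) (Nat.mul_pos hN hM)⟩

theorem multiTrans.exists_dvd [TopologicalSpace X] {f : ℕ → X → X} (ht : multiTrans f)
    {L : ℕ} (hL : 1 ≤ L) {m : ℕ} (hm : 1 ≤ m) {U V : ℕ → Set X}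
    (hUV : ∀ i < m, IsOpen (U i) ∧ (U i).Nonempty ∧ IsOpen (V i) ∧ (V i).Nonempty) :
    ∃ k ≥ 1, L ∣ k ∧ ∀ i < m, (nacomp f ((i + 1) * k) '' U i ∩ V i).Nonempty := by
  -- Spread the `m` pairs over `m * L` slots so that `U i`, `V i` sit at slot `(i + 1) * L - 1`:
  -- a multi-transitivity time `k` for the slots is then the time `L * k` for the pairs.
  have hslot : ∀ j < m * L, (j + 1) / L - 1 < m := fun j hj => by
    have : (j + 1) / L ≤ m := Nat.div_le_of_le_mul (by rw [mul_comm]; omega)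
    omega
  obtain ⟨k, hk, hkUV⟩ := ht (m * L) (Nat.mul_pos hm hL)
    (fun j => U ((j + 1) / L - 1)) (fun j => V ((j + 1) / L - 1)) (fun j hj => hUV _ (hslot j hj))
  refine ⟨L * k, Nat.mul_pos hL hk, dvd_mul_right L k, fun i hi => ?_⟩
  have hiL : 1 ≤ (i + 1) * L := Nat.mul_pos i.succ_pos hL
  have := hkUV ((i + 1) * L - 1) (by nlinarith [Nat.sub_lt hiL one_pos])
  simpa only [Nat.sub_add_cancel hiL, Nat.mul_div_cancel _ hL, Nat.add_sub_cancel, mul_assoc]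
    using this

theorem exists_pos_forall_exists_lt_dist [MetricSpace X] (hni : ∀ x : X, ¬ IsOpen ({x} : Set X)) :
    ∃ δ > 0, ∀ q : X, ∃ z, δ < dist z q := by
  rcases isEmpty_or_nonempty X with _ | ⟨⟨a⟩⟩
  · exact ⟨1, one_pos, isEmptyElim⟩
  obtain ⟨b, hba⟩ : ∃ b, b ≠ a := by
    by_contra! h
    exact hni a (by rw [show ({a} : Set X) = univ from eq_univ_of_forall h]; exact isOpen_univ)
  refine ⟨dist a b / 3, div_pos (dist_pos.2 hba.symm) three_pos, fun q => ?_⟩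
  by_contra! h
  linarith [h a, h b, dist_triangle_right a b q, dist_pos.2 hba.symm]

theorem multiSensWrt_succ_of_multiTrans [MetricSpace X] {f : ℕ → X → X} (ht : multiTrans f)
    (hdense : Dense {x : X | ∃ N ≥ 1, IsNonautPeriodicPt f N x})
    {δ : ℝ} (hδ : 0 < δ) (hfar : ∀ q : X, ∃ z, δ < dist z q) {r : ℕ} (hr : 1 ≤ r) :
    multiSensWrt f r (fun i => i + 1) := by
  refine ⟨δ, hδ, fun U hU => ?_⟩
  obtain ⟨N, hN, hq⟩ := exists_common_period hdense hU
  have : Nonempty X := ⟨(hU 0 hr).2.some⟩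
  choose! q hqU hqper using hq
  obtain ⟨k, hk, hNk, hkUV⟩ := ht.exists_dvd hN hr (U := U) (V := fun i => {z | δ < dist z (q i)})
    fun i hi => ⟨(hU i hi).1, (hU i hi).2,
      isOpen_lt continuous_const (continuous_id.dist continuous_const), hfar (q i)⟩
  refine ⟨k, hk, fun i hi => ?_⟩
  obtain ⟨_, ⟨y, hyU, rfl⟩, hy⟩ := hkUV i hi
  refine ⟨y, hyU, q i, hqU i hi, ?_⟩
  have hqi : nacomp f (k * (i + 1)) (q i) = q i :=
    (hqper i hi).nacomp_eq_self_of_dvd (dvd_mul_of_dvd_left hNk _) (Nat.mul_pos hk i.succ_pos)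
  rwa [hqi, mul_comm]

end

theorem stmt_18_general {X : Type*} [MetricSpace X]
    (hni : ∀ x : X, ¬ IsOpen ({x} : Set X))
    (f : ℕ → X → X)
    (ht : multiTrans f)
    (hdense : Dense {x : X | ∃ N ≥ 1, ∀ n ≥ 1, nacomp f (n * N) x = x}) :
    nSens f := by
  obtain ⟨δ, hδ, hfar⟩ := exists_pos_forall_exists_lt_dist hni
  exact fun r hr => multiSensWrt_succ_of_multiTrans ht hdense hδ hfar hr

/-- on a compact metric space without isolated points, if `f_n → F`
uniformly, `(X, f_{1,∞})` is multi-transitive and has dense periodic points, then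
`(X, f_{1,∞})` is 𝒩-sensitive. -/
theorem stmt_18 {X : Type*} [MetricSpace X] [CompactSpace X]
    (hni : ∀ x : X, ¬ IsOpen ({x} : Set X))
    (f : ℕ → X → X) (F : X → X) (hf : ∀ n, Continuous (f n))
    (hunif : ∀ ε > 0, ∃ N, ∀ n ≥ N, ∀ x, dist (f n x) (F x) < ε)
    (ht : multiTrans f)
    (hdense : Dense {x : X | ∃ N ≥ 1, ∀ n ≥ 1, nacomp f (n * N) x = x}) :
    nSens f :=
  stmt_18_general hni f ht hdense
end

section
/- Let (X, f_{1,∞}) be a k-periodic non-autonomous system with g = f_k ∘ ⋯ ∘ f_1. If for the vector v' = (v_1, 2v_1, …, kv_1, v_2, 2v_2, …, kv_2, …, v_r, 2v_r, …, kv_r) ∈ ℕ^{rk} and some δ > 0 the system (X, f_{1,∞}) is multi-sensitive with respect to v' with constant δ, then the autonomous system (X, g) is multi-sensitive with respect to the vector (v_1,…,v_r) with constant δ. -/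
open Metric Set MeasureTheory

namespace kPeriodic

variable {X : Type*} {f : ℕ → X → X} {k : ℕ}

theorem nacomp_mul_add (hper : kPeriodic f k) (m : ℕ) {t : ℕ} (ht : t ≤ k) :
    nacomp f (k * m + t) = nacomp f t ∘ nacomp f (k * m) := by
  rcases Nat.eq_zero_or_pos m with rfl | hm
  · rw [mul_zero, zero_add]
    rfl
  induction t with
  | zero => rfl
  | succ t ih =>
    have hshift : f (k * m + (t + 1)) = f (t + 1) := by
      rw [← hper.2 m hm (t + 1) t.succ_pos ht, add_comm (k * m)]
    change f (k * m + (t + 1)) ∘ nacomp f (k * m + t) = (f (t + 1) ∘ nacomp f t) ∘ _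
    rw [hshift, ih (by omega)]
    rfl

theorem nacomp_mul (hper : kPeriodic f k) (m : ℕ) :
    nacomp f (k * m) = (nacomp f k)^[m] := by
  induction m with
  | zero => rfl
  | succ m ih =>
    rw [Nat.mul_succ, hper.nacomp_mul_add m le_rfl, ih, Function.iterate_succ']

end kPeriodic

theorem stmt_19_general {X : Type*} [MetricSpace X] (f : ℕ → X → X) (k : ℕ) (hper : kPeriodic f k)
    (r : ℕ) (v : ℕ → ℕ) (δ : ℝ)
    (h : ∀ U : ℕ → Set X, (∀ i < r * k, IsOpen (U i) ∧ (U i).Nonempty) →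
      ∃ n ≥ 1, ∀ i < r * k, ∃ x ∈ U i, ∃ y ∈ U i,
        δ < dist (nacomp f (n * ((i % k + 1) * v (i / k))) x)
                 (nacomp f (n * ((i % k + 1) * v (i / k))) y)) :
    ∀ U : ℕ → Set X, (∀ i < r, IsOpen (U i) ∧ (U i).Nonempty) →
      ∃ n ≥ 1, ∀ i < r, ∃ x ∈ U i, ∃ y ∈ U i,
        δ < dist ((nacomp f k)^[n * v i] x) ((nacomp f k)^[n * v i] y) := by
  intro U hU
  have hk : 0 < k := hper.1
  obtain ⟨n, hn1, hn⟩ := h (fun i => U (i / k)) fun i hi =>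
    hU (i / k) (Nat.div_lt_of_lt_mul (by rwa [mul_comm] at hi))
  refine ⟨n, hn1, fun j hj => ?_⟩
  -- the entry `k * v_j` of the `j`-th block of `v'`
  have hdiv : (k * j + (k - 1)) / k = j := by
    rw [Nat.mul_add_div hk, Nat.div_eq_of_lt (by omega), add_zero]
  have hmod : (k * j + (k - 1)) % k + 1 = k := by
    rw [Nat.mul_add_mod, Nat.mod_eq_of_lt (by omega)]
    omega
  have hlt : k * j + (k - 1) < r * k := by
    have hblock := Nat.mul_le_mul_left k hj
    rw [Nat.mul_succ] at hblock
    rw [mul_comm r]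
    omega
  obtain ⟨x, hx, y, hy, hsep⟩ := hn _ hlt
  rw [hdiv, hmod, mul_left_comm, hper.nacomp_mul] at hsep
  rw [hdiv] at hx hy
  exact ⟨x, hx, y, hy, hsep⟩

/-- core step of Lemma 3.5. For a `k`-periodic system, multi-sensitivity
w.r.t. the expanded vector `v' = (v₁, 2v₁, …, kv₁, …, v_r, 2v_r, …, kv_r)` with constant
`δ` yields multi-sensitivity of `g = f_k ∘ ⋯ ∘ f_1` w.r.t. `(v₁, …, v_r)` with constant `δ`. -/
theorem stmt_19 {X : Type*} [MetricSpace X] [CompactSpace X] (f : ℕ → X → X)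
    (hf : ∀ n, Continuous (f n)) (k : ℕ) (hper : kPeriodic f k)
    (r : ℕ) (hr : 1 ≤ r) (v : ℕ → ℕ) (hv : ∀ i < r, 1 ≤ v i) (δ : ℝ) (hδ : 0 < δ)
    (h : ∀ U : ℕ → Set X, (∀ i < r * k, IsOpen (U i) ∧ (U i).Nonempty) →
      ∃ n ≥ 1, ∀ i < r * k, ∃ x ∈ U i, ∃ y ∈ U i,
        δ < dist (nacomp f (n * ((i % k + 1) * v (i / k))) x)
                 (nacomp f (n * ((i % k + 1) * v (i / k))) y)) :
    ∀ U : ℕ → Set X, (∀ i < r, IsOpen (U i) ∧ (U i).Nonempty) →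
      ∃ n ≥ 1, ∀ i < r, ∃ x ∈ U i, ∃ y ∈ U i,
        δ < dist ((nacomp f k)^[n * v i] x) ((nacomp f k)^[n * v i] y) :=
  stmt_19_general f k hper r v δ h
end
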